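/- arXiv:1210.7942 — 3 statements merged into one kernel-verified Lean document; each statement's English description precedes it below -/
import Mathlib

section
/- Let r, m, n ≥ 1, F = GF(2^r), and V = M_{m,n}(F). Fix c : {0,…,m−1} → {0,…,n−1} and let π : V → V be the ShiftRows-like map. Then π is an odd permutation if and only if m = 1, r = 1, n = 2, and gcd(n, c(0)) = 1 (i.e. c(0) is odd); equivalently, if and only if m·r·gcd(n, c(0)) = 1 and n = 2. -/
/-!
Flattening the matrix, `π` is the permutation `f ↦ f ∘ τ⁻¹` of functions
`Fin m × Fin n → F` induced by the permutation `τ (i, j) = (i, j + c i)` of positions.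
A transposition of two positions induces an involution moving exactly the
`q ^ N - q ^ (N - 1)` functions that differ there (`q = |F|`, `N = m n`), so the induced
permutation has sign `sign τ ^ (q ^ (N - 2) * C(q, 2))`. For `q = 2 ^ r` this exponent is odd
only when `r = 1` and `N = 2`, and then `τ` is the shift by `c 0` of a single row of length 2.
-/

open Equiv Equiv.Perm Fintype

section InducedPerm

variable {X F : Type*} [Fintype X] [DecidableEq X] [Fintype F] [DecidableEq F]

def funsAgreeingEquiv {a b : X} (hab : a ≠ b) :
    {f : X → F // f a = f b} ≃ ({x // x ≠ b} → F) where
  toFun f x := f.1 x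
  invFun g := ⟨fun x => if h : x = b then g ⟨a, hab⟩ else g ⟨x, h⟩, by simp [hab]⟩
  left_inv f := by
    ext x
    by_cases h : x = b
    · subst h; simp [f.2]
    · simp [h]
  right_inv g := by
    ext x
    simp [x.2]

theorem card_funs_agreeing {a b : X} (hab : a ≠ b) :
    card {f : X → F // f a = f b} = card F ^ (card X - 1) := by
  rw [card_congr (funsAgreeingEquiv hab), card_fun, card_subtype_compl, card_subtype_eq]

theorem pow_add_two_sub_pow_succ_div_two (q k : ℕ) :
    (q ^ (k + 2) - q ^ (k + 1)) / 2 = q ^ k * q.choose 2 := by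
  rw [Nat.choose_two_right,
    ← Nat.mul_div_assoc _ (even_iff_two_dvd.mp (Nat.even_mul_pred_self q))]
  congr 1
  rw [Nat.mul_sub_one, Nat.mul_sub, pow_succ, pow_succ]
  ring_nf

theorem sign_arrowCongr_swap {a b : X} (hab : a ≠ b) :
    sign ((swap a b).arrowCongr (Equiv.refl F)) =
      (-1) ^ (card F ^ (card X - 2) * (card F).choose 2) := by
  have hsq : ((swap a b).arrowCongr (Equiv.refl F)) ^ 2 = 1 := by
    ext f x; simp [sq, swap_apply_self]
  have hfix : card (Function.fixedPoints ((swap a b).arrowCongr (Equiv.refl F))) =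
      card {f : X → F // f a = f b} := by
    refine card_congr (Equiv.subtypeEquivRight fun f => ?_)
    simp only [Function.mem_fixedPoints, Function.IsFixedPt]
    constructor
    · intro h
      simpa using congrFun h b
    · intro h
      ext x
      simp only [arrowCongr_apply, Equiv.symm_swap, Function.comp_apply, coe_refl, id_eq,
        swap_apply_def]
      split_ifs <;> simp_all
  obtain ⟨k, hk⟩ : ∃ k, card X = k + 2 :=
    ⟨card X - 2, by have := Fintype.one_lt_card_iff.mpr ⟨a, b, hab⟩; omega⟩
  rw [sign_of_pow_two_eq_one hsq, hfix, card_funs_agreeing hab, card_fun, hk,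
    ← pow_add_two_sub_pow_succ_div_two]
  rfl

theorem sign_arrowCongr (σ : Perm X) :
    sign (σ.arrowCongr (Equiv.refl F)) =
      sign σ ^ (card F ^ (card X - 2) * (card F).choose 2) := by
  induction σ using swap_induction_on with
  | one => rw [Perm.sign_one, one_pow]; exact Perm.sign_one
  | swap_mul f x y hxy ih =>
    have : (swap x y * f).arrowCongr (Equiv.refl F) =
        (swap x y).arrowCongr (Equiv.refl F) * f.arrowCongr (Equiv.refl F) := rfl
    rw [this, Perm.sign_mul, Perm.sign_mul, ih, sign_arrowCongr_swap hxy, sign_swap hxy, mul_pow]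

end InducedPerm

theorem sign_addRight_fin_two (k : Fin 2) : sign (Equiv.addRight k) = -1 ↔ Nat.gcd 2 k = 1 := by
  revert k; decide

theorem units_pow_eq_neg_one_iff (u : ℤˣ) (e : ℕ) : u ^ e = -1 ↔ u = -1 ∧ Odd e := by
  rcases Int.units_eq_one_or u with rfl | rfl
  · simp
  · simp [neg_one_pow_eq_neg_one_iff_odd]

theorem odd_two_pow_choose_two_iff (r : ℕ) : Odd ((2 ^ r).choose 2) ↔ r = 1 := by
  rcases r with _ | _ | r
  · decide
  · decide
  · have hchoose : (2 ^ (r + 2)).choose 2 = 2 ^ (r + 1) * (2 ^ (r + 2) - 1) := by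
      rw [Nat.choose_two_right, pow_succ 2 (r + 1), mul_comm _ 2, mul_assoc,
        Nat.mul_div_cancel_left _ two_pos]
    have heven : Even ((2 ^ (r + 2)).choose 2) :=
      hchoose ▸ (Nat.even_pow.mpr ⟨even_two, r.succ_ne_zero⟩).mul_right _
    simp [Nat.not_odd_iff_even.mpr heven]

theorem odd_two_pow_pow_mul_choose_two_iff {r N : ℕ} (hN : 2 ≤ N) :
    Odd ((2 ^ r) ^ (N - 2) * (2 ^ r).choose 2) ↔ r = 1 ∧ N = 2 := by
  rw [Nat.odd_mul, odd_two_pow_choose_two_iff, ← pow_mul, ← Nat.not_even_iff_odd, Nat.even_pow]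
  constructor
  · rintro ⟨hpow, rfl⟩
    simp only [even_two, true_and, mul_eq_zero, not_not] at hpow
    omega
  · rintro ⟨rfl, rfl⟩
    simp

theorem two_le_of_prod_sign_addRight_eq_neg_one {m n : ℕ} [NeZero n] {c : Fin m → Fin n}
    (h : ∏ i, sign (Equiv.addRight (c i)) = -1) : 2 ≤ n := by
  obtain ⟨i, hi⟩ : ∃ i, c i ≠ 0 := by
    by_contra! hc
    simp [hc] at h
  have hci : (c i : ℕ) ≠ 0 := Fin.val_ne_zero_iff.mpr hi
  have := (c i).isLt
  omega

theorem stmt_8_general (r m n : ℕ) (hm : 0 < m)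
    (F : Type*) [Fintype F] [DecidableEq F] (hF : Fintype.card F = 2 ^ r)
    (c : Fin m → Fin n)
    (piP : Equiv.Perm (Matrix (Fin m) (Fin n) F))
    (hpi : ∀ (a : Matrix (Fin m) (Fin n) F) (i : Fin m) (j : Fin n),
      piP a i j = a i (j - c i)) :
    (Equiv.Perm.sign piP = -1 ↔
      m = 1 ∧ r = 1 ∧ n = 2 ∧ Nat.gcd n (c ⟨0, hm⟩).val = 1) ∧
    (Equiv.Perm.sign piP = -1 ↔
      m * r * Nat.gcd n (c ⟨0, hm⟩).val = 1 ∧ n = 2) := by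
  have : NeZero n := ⟨(c ⟨0, hm⟩).pos.ne'⟩
  have hconj : piP = ((Equiv.curry (Fin m) (Fin n) F).trans Matrix.of).permCongr
      ((prodCongrRight fun i => Equiv.addRight (c i)).arrowCongr (Equiv.refl F)) := by
    ext a i j
    simp [hpi, sub_eq_add_neg]
  have hsign : sign piP =
      (∏ i, sign (Equiv.addRight (c i))) ^ ((2 ^ r) ^ (m * n - 2) * (2 ^ r).choose 2) := by
    rw [hconj, sign_permCongr, sign_arrowCongr, sign_prodCongrRight, hF, card_prod, card_fin,
      card_fin]
  have key : sign piP = -1 ↔ m = 1 ∧ r = 1 ∧ n = 2 ∧ Nat.gcd n (c ⟨0, hm⟩).val = 1 := by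
    rw [hsign, units_pow_eq_neg_one_iff]
    constructor
    · rintro ⟨hprod, hodd⟩
      have hn := two_le_of_prod_sign_addRight_eq_neg_one hprod
      have hmn : n ≤ m * n := Nat.le_mul_of_pos_left n hm
      obtain ⟨rfl, hmn2⟩ := (odd_two_pow_pow_mul_choose_two_iff (hn.trans hmn)).mp hodd
      obtain ⟨rfl, rfl⟩ : m = 1 ∧ n = 2 := by constructor <;> nlinarith
      rw [Fin.prod_univ_one] at hprod
      exact ⟨rfl, rfl, rfl, (sign_addRight_fin_two _).mp hprod⟩
    · rintro ⟨rfl, rfl, rfl, hgcd⟩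
      rw [Fin.prod_univ_one]
      exact ⟨(sign_addRight_fin_two _).mpr hgcd, by decide⟩
  refine ⟨key, key.trans ?_⟩
  rw [mul_eq_one, mul_eq_one]
  tauto

/-- Parity of the ShiftRows-like permutation `π` on `M_{m,n}(GF(2^r))`:
`π` is odd iff `m = 1`, `r = 1`, `n = 2` and `gcd(n, c(0)) = 1`; equivalently, iff
`m·r·gcd(n, c(0)) = 1` and `n = 2`. -/
theorem stmt_8 (r m n : ℕ) (hr : 1 ≤ r) (hm : 0 < m) (hn : 1 ≤ n)
    (F : Type*) [Field F] [Fintype F] [DecidableEq F] (hF : Fintype.card F = 2 ^ r)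
    (c : Fin m → Fin n)
    (piP : Equiv.Perm (Matrix (Fin m) (Fin n) F))
    (hpi : ∀ (a : Matrix (Fin m) (Fin n) F) (i : Fin m) (j : Fin n),
      piP a i j = a i (j - c i)) :
    (Equiv.Perm.sign piP = -1 ↔
      m = 1 ∧ r = 1 ∧ n = 2 ∧ Nat.gcd n (c ⟨0, hm⟩).val = 1) ∧
    (Equiv.Perm.sign piP = -1 ↔
      m * r * Nat.gcd n (c ⟨0, hm⟩).val = 1 ∧ n = 2) :=
  stmt_8_general r m n hm F hF c piP hpi
end

section
/- Let p > 2 be a prime, r, m, n ≥ 1, F = GF(p^r), and V = M_{m,n}(F). Suppose either (i) s is even and ρ is an odd permutation, or (ii) s is odd and at least one of π, λ is an odd permutation. Then the set 𝒯_s = { T_s[k_1,…,k_{s+1}] : k_1, …, k_{s+1} ∈ V } of all s-round generalized Rijndael-like functions is not closed under functional composition; in particular there exist f, g ∈ 𝒯_s with f ∘ g ∉ 𝒯_s, so 𝒯_s is not a group. -/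
/-- The `s`-round function
`T_s = σ[k_{s+1}] ∘ π ∘ λ ∘ (σ[k_s] ∘ ρ ∘ π ∘ λ) ∘ ⋯ ∘ (σ[k_2] ∘ ρ ∘ π ∘ λ) ∘ σ[k_1]`,
as a permutation (permutation multiplication is function composition). -/
def sRound {V : Type*} [AddGroup V] (rho piP lam : Equiv.Perm V)
    (s : ℕ) (k : ℕ → V) : Equiv.Perm V :=
  Equiv.addRight (k (s + 1)) * piP * lam *
    (List.ofFn fun i : Fin (s - 1) =>
      Equiv.addRight (k (s - i.val)) * rho * piP * lam).prod *
    Equiv.addRight (k 1)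

/-!
Since `|V| = p ^ (r m n)` is odd, every translation `σ[k]` has odd order and is therefore an
even permutation, so the sign of `T_s` does not depend on the keys: it is
`sgn(ρ) ^ (s - 1) * (sgn(π) * sgn(λ)) ^ s`. Under either hypothesis this sign is `-1`. In case (ii)
this needs that `π` and `λ` are not both odd: `π ^ n = 1`, so `π` odd forces `n` even, while `λ`
applies one permutation `S` of `F` to every entry, whence `sgn(λ) = sgn(S) ^ (m n)` (again because
`|F|` is odd), and `n` even forces `λ` even. Thus every element of `𝒯_s` is odd, and the
composite of any two of them is even.
-/

open Equiv Equiv.Perm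

theorem Int.units_pow_of_even (u : ℤˣ) {k : ℕ} (hk : Even k) : u ^ k = 1 := by
  rw [Int.units_pow_eq_pow_mod_two, Nat.even_iff.mp hk, pow_zero]

theorem Int.units_pow_of_odd (u : ℤˣ) {k : ℕ} (hk : Odd k) : u ^ k = u := by
  rw [Int.units_pow_eq_pow_mod_two, Nat.odd_iff.mp hk, pow_one]

namespace Equiv.Perm

variable {α : Type*} [Fintype α] [DecidableEq α]

theorem sign_eq_one_of_pow_eq_one_of_odd {σ : Perm α} {k : ℕ} (hk : Odd k) (h : σ ^ k = 1) :
    sign σ = 1 := by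
  rw [← Int.units_pow_of_odd (sign σ) hk, ← map_pow, h, map_one]

theorem sign_addRight_of_odd_card {G : Type*} [AddGroup G] [Fintype G] [DecidableEq G]
    (hG : Odd (Fintype.card G)) (g : G) : sign (Equiv.addRight g) = 1 :=
  sign_eq_one_of_pow_eq_one_of_odd hG (by rw [nsmul_addRight, card_nsmul_eq_zero, addRight_zero])

theorem sign_prodCongr {β : Type*} [Fintype β] [DecidableEq β] (σ : Perm α) (τ : Perm β) :
    sign (prodCongr σ τ) = sign σ ^ Fintype.card β * sign τ ^ Fintype.card α := by
  have : prodCongr σ τ = prodCongrLeft (fun _ : β => σ) * prodCongrRight (fun _ : α => τ) := by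
    ext ⟨a, b⟩ <;> rfl
  rw [this, map_mul, sign_prodCongrLeft, sign_prodCongrRight, Finset.prod_const,
    Finset.prod_const, Finset.card_univ, Finset.card_univ]

theorem sign_piCongrRight_fin (hα : Odd (Fintype.card α)) (g : Perm α) (k : ℕ) :
    sign (piCongrRight fun _ : Fin k => g) = sign g ^ k := by
  induction k with
  | zero => rw [pow_zero, Subsingleton.elim (piCongrRight fun _ : Fin 0 => g) 1, map_one]
  | succ k ih =>
    have hcons : ∀ x, Fin.consEquiv (fun _ => α) (prodCongr g (piCongrRight fun _ => g) x) =
        piCongrRight (fun _ : Fin (k + 1) => g) (Fin.consEquiv (fun _ => α) x) := by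
      rintro ⟨a, v⟩
      ext i
      refine Fin.cases ?_ (fun i => ?_) i <;> rfl
    rw [← sign_eq_sign_of_equiv _ _ _ hcons, sign_prodCongr, Fintype.card_fun, Fintype.card_fin,
      Int.units_pow_of_odd _ hα.pow, Int.units_pow_of_odd _ hα, ih, pow_succ']

theorem sign_piCongrRight_const {ι : Type*} [Fintype ι] [DecidableEq ι]
    (hα : Odd (Fintype.card α)) (g : Perm α) :
    sign (piCongrRight fun _ : ι => g) = sign g ^ Fintype.card ι := by
  rw [← sign_piCongrRight_fin hα g]
  exact sign_eq_sign_of_equiv _ _ (arrowCongr (Fintype.equivFin ι) (Equiv.refl α)) fun _ => rfl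

end Equiv.Perm

section RijndaelLike

variable {ι κ α : Type*}

def IsRowShift {n : ℕ} (c : ι → Fin n) (π : Perm (Matrix ι (Fin n) α)) : Prop :=
  ∀ a i j, π a i j = a i (j - c i)

def IsEntrywise (g : Perm α) (σ : Perm (Matrix ι κ α)) : Prop :=
  ∀ a i j, σ a i j = g (a i j)

theorem IsRowShift.pow_eq_one {n : ℕ} {c : ι → Fin n} {π : Perm (Matrix ι (Fin n) α)}
    (hπ : IsRowShift c π) : π ^ n = 1 := by
  cases n with
  | zero => exact pow_zero π
  | succ n =>
    have hpow : ∀ (t : ℕ) a i j, (π ^ t) a i j = a i (j - t • c i) := by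
      intro t
      induction t with
      | zero => intro a i j; simp
      | succ t ih => intro a i j; rw [pow_succ, Perm.mul_apply, ih, hπ, sub_sub, ← succ_nsmul]
    ext a i j
    rw [hpow, Perm.one_apply]
    simpa using congrArg (a i <| j - ·) (card_nsmul_eq_zero (x := c i))

theorem IsEntrywise.sign_eq [Fintype ι] [DecidableEq ι] [Fintype κ] [DecidableEq κ]
    [Fintype α] [DecidableEq α] (hα : Odd (Fintype.card α))
    {g : Perm α} {σ : Perm (Matrix ι κ α)} (hσ : IsEntrywise g σ) :
    sign σ = (sign g ^ Fintype.card κ) ^ Fintype.card ι := by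
  rw [sign_eq_sign_of_equiv σ (piCongrRight fun _ : ι => piCongrRight fun _ : κ => g) Matrix.of.symm
    fun a => funext₂ (hσ a), sign_piCongrRight_const (by rw [Fintype.card_fun]; exact hα.pow),
    sign_piCongrRight_const hα]

theorem sign_mul_sign_eq_neg_one_of_isRowShift_of_isEntrywise [Fintype ι] [DecidableEq ι]
    [Fintype α] [DecidableEq α] (hα : Odd (Fintype.card α))
    {n : ℕ} {c : ι → Fin n} {π : Perm (Matrix ι (Fin n) α)} (hπ : IsRowShift c π)
    {g : Perm α} {σ : Perm (Matrix ι (Fin n) α)} (hσ : IsEntrywise g σ)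
    (h : sign π = -1 ∨ sign σ = -1) : sign π * sign σ = -1 := by
  rcases Nat.even_or_odd n with hn | hn
  · have hσ1 : sign σ = 1 := by
      rw [hσ.sign_eq hα, Fintype.card_fin, Int.units_pow_of_even _ hn, one_pow]
    simpa [hσ1] using h
  · have hπ1 : sign π = 1 := sign_eq_one_of_pow_eq_one_of_odd hn hπ.pow_eq_one
    simpa [hπ1] using h

end RijndaelLike

theorem sign_sRound {V : Type*} [AddGroup V] [Fintype V] [DecidableEq V]
    (hV : Odd (Fintype.card V)) (ρ π σ : Perm V) {s : ℕ} (hs : 0 < s) (k : ℕ → V) :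
    sign (sRound ρ π σ s k) = sign ρ ^ (s - 1) * (sign π * sign σ) ^ s := by
  obtain ⟨t, rfl⟩ : ∃ t, s = t + 1 := ⟨s - 1, by omega⟩
  simp only [sRound, map_mul, map_list_prod, List.map_ofFn, Function.comp_def,
    sign_addRight_of_odd_card hV, List.ofFn_const, List.prod_replicate, one_mul, mul_one,
    Nat.add_sub_cancel]
  rw [mul_assoc (sign ρ), mul_pow, pow_succ']
  exact mul_left_comm _ _ _

theorem sign_sRound_eq_neg_one {V : Type*} [AddGroup V] [Fintype V] [DecidableEq V]
    (hV : Odd (Fintype.card V)) {ρ π σ : Perm V} {s : ℕ} (hs : 1 < s)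
    (h : (Even s ∧ sign ρ = -1) ∨ (Odd s ∧ sign π * sign σ = -1)) (k : ℕ → V) :
    sign (sRound ρ π σ s k) = -1 := by
  rw [sign_sRound hV ρ π σ (by omega) k]
  rcases h with ⟨hs_even, hρ⟩ | ⟨hs_odd, hπσ⟩
  · rw [hρ, Int.units_pow_of_odd _ (Nat.Even.sub_odd (by omega) hs_even odd_one),
      Int.units_pow_of_even _ hs_even, mul_one]
  · rw [hπσ, Int.units_pow_of_even _ (Nat.Odd.sub_odd hs_odd odd_one),
      Int.units_pow_of_odd _ hs_odd, one_mul]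

theorem stmt_13_general (p r m n : ℕ) (hp : p.Prime) (hp2 : 2 < p)
    (F : Type*) [Field F] [Fintype F] [DecidableEq F] (hF : Fintype.card F = p ^ r)
    (A B : F) (hA : A ≠ 0) (c : Fin m → Fin n)
    (lam piP rho : Equiv.Perm (Matrix (Fin m) (Fin n) F))
    (hlam : ∀ (a : Matrix (Fin m) (Fin n) F) (i : Fin m) (j : Fin n),
      lam a i j = A * (a i j)⁻¹ + B)
    (hpi : ∀ (a : Matrix (Fin m) (Fin n) F) (i : Fin m) (j : Fin n),
      piP a i j = a i (j - c i))
    (s : ℕ) (hs : 1 < s)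
    (hcond : (Even s ∧ Equiv.Perm.sign rho = -1) ∨
      (Odd s ∧ (Equiv.Perm.sign piP = -1 ∨ Equiv.Perm.sign lam = -1))) :
    ∃ f ∈ {f : Equiv.Perm (Matrix (Fin m) (Fin n) F) |
        ∃ k : ℕ → Matrix (Fin m) (Fin n) F, f = sRound rho piP lam s k},
      ∃ g ∈ {f : Equiv.Perm (Matrix (Fin m) (Fin n) F) |
        ∃ k : ℕ → Matrix (Fin m) (Fin n) F, f = sRound rho piP lam s k},
      f * g ∉ {f : Equiv.Perm (Matrix (Fin m) (Fin n) F) |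
        ∃ k : ℕ → Matrix (Fin m) (Fin n) F, f = sRound rho piP lam s k} := by
  have hF_odd : Odd (Fintype.card F) := hF ▸ (hp.odd_of_ne_two hp2.ne').pow
  have hV_odd : Odd (Fintype.card (Matrix (Fin m) (Fin n) F)) := by
    rw [Fintype.card_congr Matrix.of.symm, Fintype.card_fun, Fintype.card_fun]
    exact hF_odd.pow.pow
  have hlam_entrywise :
      IsEntrywise ((Equiv.inv F).trans ((Equiv.mulLeft₀ A hA).trans (Equiv.addRight B))) lam :=
    hlam
  have hround (k : ℕ → Matrix (Fin m) (Fin n) F) : sign (sRound rho piP lam s k) = -1 :=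
    sign_sRound_eq_neg_one hV_odd hs (hcond.imp_right fun ⟨hs_odd, h⟩ =>
      ⟨hs_odd, sign_mul_sign_eq_neg_one_of_isRowShift_of_isEntrywise hF_odd hpi hlam_entrywise h⟩) k
  refine ⟨_, ⟨fun _ => 0, rfl⟩, _, ⟨fun _ => 0, rfl⟩, ?_⟩
  rintro ⟨k, hk⟩
  have hsign := congrArg sign hk
  rw [map_mul, hround, hround] at hsign
  exact absurd hsign (by decide)

/-- For `p > 2`, if either (`s` is even and `ρ` is odd) or (`s` is odd and `π` or `λ` is
odd), then the set of all `s`-round generalized Rijndael-like functions on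
`M_{m,n}(GF(p^r))` is not closed under composition: there are `f, g` in the set whose
composite `f ∘ g` is not in the set; in particular the set is not a group. -/
theorem stmt_13 (p r m n : ℕ) (hp : p.Prime) (hp2 : 2 < p)
    (hr : 1 ≤ r) (hm : 1 ≤ m) (hn : 1 ≤ n)
    (F : Type*) [Field F] [Fintype F] [DecidableEq F] (hF : Fintype.card F = p ^ r)
    (A B : F) (hA : A ≠ 0) (c : Fin m → Fin n)
    (C : Matrix (Fin m) (Fin m) F) (hC : IsUnit C)
    (lam piP rho : Equiv.Perm (Matrix (Fin m) (Fin n) F))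
    (hlam : ∀ (a : Matrix (Fin m) (Fin n) F) (i : Fin m) (j : Fin n),
      lam a i j = A * (a i j)⁻¹ + B)
    (hpi : ∀ (a : Matrix (Fin m) (Fin n) F) (i : Fin m) (j : Fin n),
      piP a i j = a i (j - c i))
    (hrho : ∀ a : Matrix (Fin m) (Fin n) F, rho a = C * a)
    (s : ℕ) (hs : 1 < s)
    (hcond : (Even s ∧ Equiv.Perm.sign rho = -1) ∨
      (Odd s ∧ (Equiv.Perm.sign piP = -1 ∨ Equiv.Perm.sign lam = -1))) :
    ∃ f ∈ {f : Equiv.Perm (Matrix (Fin m) (Fin n) F) |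
        ∃ k : ℕ → Matrix (Fin m) (Fin n) F, f = sRound rho piP lam s k},
      ∃ g ∈ {f : Equiv.Perm (Matrix (Fin m) (Fin n) F) |
        ∃ k : ℕ → Matrix (Fin m) (Fin n) F, f = sRound rho piP lam s k},
      f * g ∉ {f : Equiv.Perm (Matrix (Fin m) (Fin n) F) |
        ∃ k : ℕ → Matrix (Fin m) (Fin n) F, f = sRound rho piP lam s k} :=
  stmt_13_general p r m n hp hp2 F hF A B hA c lam piP rho hlam hpi s hs hcond
end

section
/- Let p be a prime, r > 4, m, n ≥ 1, F = GF(p^r), and V = M_{m,n}(F). Let γ : V → V be the piecewise inversion map and α = ρ ∘ π, where π is the ShiftRows-like map and ρ(a) = C·a with C an invertible m×m matrix over F. Suppose U is a GF(p)-linear subspace of V with U ≠ {0} such that for all u ∈ U and all v ∈ V, (α ∘ γ)(v + u) − (α ∘ γ)(v) ∈ U. Then α(U) = U and U is a direct sum of some of the entry subspaces: there is a set S of positions (i,j) such that U = { a ∈ V : a_{i,j} = 0 for all (i,j) ∉ S }. -/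
/-!
Let `u ∈ U` have a nonzero entry `t` at `(i, j)`. Applying the hypothesis at `v = single i j x` and
at `v = 0` shows that the additive subgroup `B = {y | α (single i j y) ∈ U}` of `F` contains every
`(x + t)⁻¹ - x⁻¹ - t⁻¹`. Off `x ∈ {0, -t}` these values are taken at most twice, so `B` has index
at most two. Index two forces characteristic two, and after rescaling by `t` it says that a nonzero
character `ψ : F → 𝔽₂` is constant on the inverses of the nonzero elements of the Artin–Schreier
subgroup `{u ^ 2 + u}`. Counting then makes `x ↦ ψ x⁻¹` affine off a single point, and the identity
`x⁻¹ + (s x)⁻¹ + ((s + 1) x)⁻¹ = c x⁻¹` makes `ψ` constant off four points, impossible once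
`|F| > 8`. So `B = F`: `α` maps the matrices supported on the support of `U` into `U`, and since `α`
is injective both inclusions are equalities.
-/

/-- The ShiftRows-like map: row `i` is cyclically shifted by `c i`. -/
def shiftRowsMap {F : Type*} {m n : ℕ} (c : Fin m → Fin n)
    (a : Matrix (Fin m) (Fin n) F) : Matrix (Fin m) (Fin n) F :=
  Matrix.of fun i j => a i (j - c i)

/-- The piecewise (entrywise) Galois-field inversion map `γ`. -/
def piecewiseInv {F : Type*} [Field F] {m n : ℕ}
    (a : Matrix (Fin m) (Fin n) F) : Matrix (Fin m) (Fin n) F :=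
  Matrix.of fun i j => (a i j)⁻¹

open Finset

theorem AddSubgroup.exists_zmod_two_hom_ker_eq {G : Type*} [AddCommGroup G] {H : AddSubgroup G}
    (h : H.index = 2) : ∃ χ : G →+ ZMod 2, χ.ker = H := by
  classical
  refine ⟨AddMonoidHom.mk' (fun g => if g ∈ H then 0 else 1) fun a b => ?_, ?_⟩
  · simp only [add_mem_iff_of_index_two h]
    split_ifs <;> simp_all; decide
  · ext g
    simp only [AddMonoidHom.mem_ker, AddMonoidHom.mk'_apply]
    split_ifs <;> simp_all

theorem AddMonoidHom.two_mul_card_fiber_zmod_two {G : Type*} [AddCommGroup G] [Fintype G]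
    {ψ : G →+ ZMod 2} (hψ : ψ ≠ 0) (ε : ZMod 2) :
    2 * #{g | ψ g = ε} = Fintype.card G := by
  have hrange : ∀ e : ZMod 2, e ∈ Set.range ψ := by
    obtain ⟨g, hg⟩ := DFunLike.ne_iff.mp hψ
    have hg1 : ψ g = 1 := (by decide : ∀ a : ZMod 2, a ≠ 0 → a = 1) _ hg
    intro e
    fin_cases e
    exacts [⟨0, map_zero ψ⟩, ⟨g, hg1⟩]
  have hfib := card_eq_sum_card_fiberwise (s := univ) (t := univ) (f := ψ) fun _ _ => mem_univ _
  rw [card_univ] at hfib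
  rw [hfib, sum_congr rfl fun e _ => card_fiber_eq_of_mem_range ψ (hrange e) (hrange ε)]
  simp [ZMod.card]

theorem Set.image_eq_self_and_eq_of_image_subset {α : Type*} {f : α → α}
    (hf : Function.Injective f) {s t : Set α} (hs : s.Finite) (hts : t ⊆ s) (hst : f '' s ⊆ t) :
    f '' t = t ∧ t = s := by
  have hcard : (f '' s).ncard = s.ncard := Set.ncard_image_of_injective s hf
  have hsub : f '' s = t := Set.eq_of_subset_of_ncard_le hst
    (hcard ▸ Set.ncard_le_ncard hts hs) (hs.subset hts)
  have hts' : t = s := Set.eq_of_subset_of_ncard_le hts (hsub ▸ hcard.ge) hs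
  exact ⟨hts' ▸ hsub, hts'⟩

section Inversion

variable {F : Type*} [Field F]

theorem eq_or_eq_neg_sub_of_inv_add_sub_inv_eq {t x y : F} (ht : t ≠ 0) (hx : x ≠ 0)
    (hxt : x + t ≠ 0) (hy : y ≠ 0) (hyt : y + t ≠ 0)
    (h : (x + t)⁻¹ - x⁻¹ = (y + t)⁻¹ - y⁻¹) : y = x ∨ y = -t - x := by
  field_simp at h
  have key : t * ((y - x) * (y + x + t)) = 0 := by linear_combination -h
  rcases mul_eq_zero.mp ((mul_eq_zero.mp key).resolve_left ht) with h' | h'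
  · exact .inl (sub_eq_zero.mp h')
  · exact .inr (by linear_combination h')

variable [Fintype F]

theorem AddSubgroup.card_le_two_mul_card_add_two_of_forall_inv_add_sub_inv_sub_inv_mem {t : F}
    (ht : t ≠ 0) {B : AddSubgroup F} (hB : ∀ x, (x + t)⁻¹ - x⁻¹ - t⁻¹ ∈ B) :
    Fintype.card F ≤ 2 * Nat.card B + 2 := by
  classical
  set g : F → F := fun x => (x + t)⁻¹ - x⁻¹ - t⁻¹
  have hfiber : ∀ b ∈ (univ \ {0, -t}).image g, #{x ∈ univ \ {0, -t} | g x = b} ≤ 2 := by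
    intro b hb
    obtain ⟨x, hx, rfl⟩ := mem_image.mp hb
    refine (card_le_card fun y hy => ?_).trans (card_insert_le x {-t - x})
    simp only [mem_filter, mem_sdiff, mem_univ, mem_insert, mem_singleton, true_and, not_or,
      g] at hx hy ⊢
    exact eq_or_eq_neg_sub_of_inv_add_sub_inv_eq ht hx.1 (by grind) hy.1.1 (by grind)
      (by linear_combination -hy.2)
  have hcount := card_le_mul_card_image _ 2 hfiber
  have himage : #((univ \ {0, -t}).image g) ≤ Nat.card B := by
    rw [← SetLike.coe_sort_coe, Nat.card_eq_card_toFinset]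
    exact card_le_card fun b hb => by
      obtain ⟨x, -, rfl⟩ := mem_image.mp hb
      simpa using hB x
  have hpoles : Fintype.card F ≤ #(univ \ {0, -t}) + 2 := by
    rw [card_sdiff_of_subset (subset_univ _), card_univ]
    have := card_le_two (a := (0 : F)) (b := -t)
    omega
  omega

theorem AddSubgroup.index_eq_two_of_forall_inv_add_sub_inv_sub_inv_mem
    (hF : 6 < Fintype.card F) {t : F} (ht : t ≠ 0) {B : AddSubgroup F}
    (hB : ∀ x, (x + t)⁻¹ - x⁻¹ - t⁻¹ ∈ B) (hBtop : B ≠ ⊤) : B.index = 2 := by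
  have hcard := card_le_two_mul_card_add_two_of_forall_inv_add_sub_inv_sub_inv_mem ht hB
  have hmul := B.index_mul_card
  have hne : B.index ≠ 1 := fun h => hBtop (AddSubgroup.index_eq_one.mp h)
  have hpos : B.index ≠ 0 := B.index_ne_zero_of_finite
  rw [Nat.card_eq_fintype_card (α := F)] at hmul
  by_contra h2
  have h3 : 3 * Nat.card B ≤ Fintype.card F := hmul ▸ Nat.mul_le_mul_right _ (by omega)
  omega

theorem two_mul_card_filter_inv_eq {ψ : F →+ ZMod 2} (hψ : ψ ≠ 0) (ε : ZMod 2) :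
    2 * #{z | ψ z⁻¹ = ε} = Fintype.card F := by
  rw [← AddMonoidHom.two_mul_card_fiber_zmod_two hψ ε]
  congr 1
  exact card_nbij' (·⁻¹) (·⁻¹) (fun z hz => by simpa using hz) (fun z hz => by simpa using hz)
    (fun z _ => inv_inv z) (fun z _ => inv_inv z)

theorem exists_forall_ne_inv_eq_add {χ ψ : F →+ ZMod 2} (hχ : χ ≠ 0) (hψ : ψ ≠ 0) {ε : ZMod 2}
    (h : ∀ z ∈ χ.ker, z ≠ 0 → ψ z⁻¹ = ε) : ∃ zs, ∀ z ≠ 0, z ≠ zs → ψ z⁻¹ = ε + χ z := by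
  classical
  set A : Finset F := {z | ψ z⁻¹ = ε}
  set K : Finset F := {z | χ z = 0}
  have hA : 2 * #A = Fintype.card F := two_mul_card_filter_inv_eq hψ ε
  have hK : 2 * #K = Fintype.card F := AddMonoidHom.two_mul_card_fiber_zmod_two hχ 0
  have hKA : K.erase 0 ⊆ A := fun z hz => by
    obtain ⟨hz0, hz⟩ := mem_erase.mp hz
    exact mem_filter.mpr ⟨mem_univ _, h z (mem_filter.mp hz).2 hz0⟩
  have hAK : #(A \ K) ≤ 1 := by
    have hdisj : Disjoint (A \ K) (K.erase 0) :=
      disjoint_left.mpr fun z hz hz' => (mem_sdiff.mp hz).2 (mem_of_mem_erase hz')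
    have := card_le_card (union_subset (sdiff_subset (t := K)) hKA)
    rw [card_union_of_disjoint hdisj, card_erase_of_mem (by simp [K])] at this
    omega
  obtain ⟨zs, hzs⟩ := card_le_one_iff_subset_singleton.mp hAK
  refine ⟨zs, fun z hz0 hzs' => ?_⟩
  by_cases hχz : χ z = 0
  · rw [hχz, add_zero]
    exact h z hχz hz0
  · have hzA : ψ z⁻¹ ≠ ε := fun hzA => hzs' <| mem_singleton.mp <|
      hzs (mem_sdiff.mpr ⟨by simpa [A] using hzA, by simpa [K] using hχz⟩)
    exact (by decide : ∀ a b e : ZMod 2, a ≠ e → b ≠ 0 → a = e + b) _ _ _ hzA hχz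

end Inversion

section CharTwo

variable (F : Type*) [Field F] [CharP F 2]

def artinSchreierHom : F →+ F :=
  AddMonoidHom.mk' (fun u => u ^ 2 + u) fun a b => by
    rw [add_pow_char]
    ring

variable {F}

@[simp]
theorem artinSchreierHom_apply (u : F) : artinSchreierHom F u = u ^ 2 + u := rfl

theorem artinSchreierHom_eq_zero_iff {u : F} : artinSchreierHom F u = 0 ↔ u = 0 ∨ u = 1 := by
  rw [artinSchreierHom_apply, show u ^ 2 + u = u * (u + 1) by ring, mul_eq_zero,
    CharTwo.add_eq_zero]

theorem index_range_artinSchreierHom [Finite F] : (artinSchreierHom F).range.index = 2 := by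
  have hker : ((artinSchreierHom F).ker : Set F) = {0, 1} := by
    ext u
    simp only [SetLike.mem_coe, AddMonoidHom.mem_ker, Set.mem_insert_iff, Set.mem_singleton_iff]
    exact artinSchreierHom_eq_zero_iff
  have := (artinSchreierHom F).ker.card_mul_index
  rw [AddSubgroup.index_ker, ← SetLike.coe_sort_coe, hker, Nat.card_coe_set_eq,
    Set.ncard_pair zero_ne_one, ← (artinSchreierHom F).range.card_mul_index] at this
  exact Nat.eq_of_mul_eq_mul_left Nat.card_pos (by linarith)

theorem exists_artinSchreierHom_ne_zero_ne_one [Fintype F] (hF : 4 < Fintype.card F) :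
    ∃ u : F, artinSchreierHom F u ≠ 0 ∧ artinSchreierHom F u ≠ 1 := by
  classical
  have hcard := (artinSchreierHom F).range.card_mul_index
  rw [index_range_artinSchreierHom, Nat.card_eq_fintype_card (α := F),
    ← SetLike.coe_sort_coe, Nat.card_eq_card_toFinset] at hcard
  obtain ⟨e, he, he01⟩ := exists_mem_notMem_of_card_lt_card
    (s := {0, 1}) (t := ((artinSchreierHom F).range : Set F).toFinset)
    (card_le_two.trans_lt (by omega))
  obtain ⟨u, rfl⟩ := AddMonoidHom.mem_range.mp (Set.mem_toFinset.mp he)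
  simp only [mem_insert, mem_singleton, not_or] at he01
  exact ⟨u, he01⟩

theorem inv_mul_add_sub_inv_mul_sub_inv {t u : F} (ht : t ≠ 0) (hu : u ^ 2 + u ≠ 0) :
    (t * u + t)⁻¹ - (t * u)⁻¹ - t⁻¹ = t⁻¹ * ((u ^ 2 + u)⁻¹ + 1) := by
  have h2 : (2 : F) = 0 := CharTwo.two_eq_zero
  have hu0 : u ≠ 0 := by rintro rfl; simp at hu
  have hu1 : u + 1 ≠ 0 := fun h => hu (by linear_combination u * h)
  field_simp
  linear_combination -(u ^ 2 + u + 1) * h2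

theorem inv_add_inv_mul_add_inv_mul {s : F} (hs0 : s ≠ 0) (hs1 : s + 1 ≠ 0) (x : F) :
    x⁻¹ + (s * x)⁻¹ + ((s + 1) * x)⁻¹ = (s ^ 2 + s + 1) / (s ^ 2 + s) * x⁻¹ := by
  have h2 : (2 : F) = 0 := CharTwo.two_eq_zero
  rcases eq_or_ne x 0 with rfl | hx
  · simp
  field_simp
  linear_combination s * h2

theorem map_div_mul_inv_eq_of_forall_ne_inv_eq_add {χ ψ : F →+ ZMod 2} {ε : ZMod 2} {zs : F}
    (hzs : ∀ z ≠ 0, z ≠ zs → ψ z⁻¹ = ε + χ z) {s x : F} (hs0 : s ≠ 0) (hs1 : s + 1 ≠ 0)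
    (hx0 : x ≠ 0) (hx : x ≠ zs) (hsx : s * x ≠ zs) (hs1x : (s + 1) * x ≠ zs) :
    ψ ((s ^ 2 + s + 1) / (s ^ 2 + s) * x⁻¹) = ε := by
  have hχ : χ x + χ (s * x) + χ ((s + 1) * x) = 0 := by
    rw [← map_add, ← map_add, ← map_zero χ]
    congr 1
    linear_combination (s + 1) * x * (CharTwo.two_eq_zero : (2 : F) = 0)
  rw [← inv_add_inv_mul_add_inv_mul hs0 hs1, map_add, map_add, hzs x hx0 hx,
    hzs _ (mul_ne_zero hs0 hx0) hsx, hzs _ (mul_ne_zero hs1 hx0) hs1x]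
  exact (by decide : ∀ a b c e : ZMod 2, a + b + c = 0 → e + a + (e + b) + (e + c) = e)
    _ _ _ _ hχ

theorem exists_mem_range_artinSchreierHom_inv_ne [Fintype F] (hF : 8 < Fintype.card F)
    {ψ : F →+ ZMod 2} (hψ : ψ ≠ 0) (ε : ZMod 2) :
    ∃ s ∈ (artinSchreierHom F).range, s ≠ 0 ∧ ψ s⁻¹ ≠ ε := by
  classical
  by_contra! h
  obtain ⟨χ, hχ⟩ := AddSubgroup.exists_zmod_two_hom_ker_eq (index_range_artinSchreierHom (F := F))
  have hχ0 : χ ≠ 0 := fun h0 => by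
    simpa [← hχ, AddMonoidHom.ker_eq_top_iff.mpr h0] using index_range_artinSchreierHom (F := F)
  obtain ⟨zs, hzs⟩ := exists_forall_ne_inv_eq_add hχ0 hψ fun z hz => h z (hχ ▸ hz)
  obtain ⟨s, hAs0, hAs1⟩ := exists_artinSchreierHom_ne_zero_ne_one (F := F) (by omega)
  have hs0 : s ≠ 0 := fun h => hAs0 (artinSchreierHom_eq_zero_iff.mpr (.inl h))
  have hs1 : s + 1 ≠ 0 := fun h => hAs0 (artinSchreierHom_eq_zero_iff.mpr (.inr
    (CharTwo.add_eq_zero.mp h)))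
  set c := (s ^ 2 + s + 1) / (s ^ 2 + s)
  have hc : c ≠ 0 := div_ne_zero (fun h => hAs1 (CharTwo.add_eq_zero.mp h)) hAs0
  -- `x ↦ c⁻¹ * x` maps all but four points into `{z | ψ z⁻¹ = ε}`, which has `|F| / 2` points
  set X : Finset F := {0, zs, s⁻¹ * zs, (s + 1)⁻¹ * zs}
  have hmaps : Set.MapsTo (c⁻¹ * ·) (univ \ X : Finset F) ({z | ψ z⁻¹ = ε} : Finset F) := by
    intro x hx
    simp only [X, coe_sdiff, coe_univ, Set.mem_sdiff, Set.mem_univ, true_and, coe_insert,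
      coe_singleton, Set.mem_insert_iff, Set.mem_singleton_iff, not_or] at hx
    obtain ⟨hx0, hxz, hsx, hs1x⟩ := hx
    simp only [coe_filter, mem_univ, true_and, Set.mem_ofPred_eq, mul_inv, inv_inv]
    exact map_div_mul_inv_eq_of_forall_ne_inv_eq_add hzs hs0 hs1 hx0 hxz
      (fun h => hsx (by rw [← h, inv_mul_cancel_left₀ hs0]))
      (fun h => hs1x (by rw [← h, inv_mul_cancel_left₀ hs1]))
  have hcard := card_le_card_of_injOn _ hmaps fun x _ y _ h => mul_left_cancel₀ (inv_ne_zero hc) h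
  rw [card_sdiff_of_subset (subset_univ _), card_univ] at hcard
  have := two_mul_card_filter_inv_eq hψ ε
  have : #X ≤ 4 := card_le_four
  omega

end CharTwo

theorem AddSubgroup.eq_top_of_forall_inv_add_sub_inv_sub_inv_mem {F : Type*} [Field F]
    [Fintype F] (hF : 8 < Fintype.card F) {t : F} (ht : t ≠ 0) {B : AddSubgroup F}
    (hB : ∀ x, (x + t)⁻¹ - x⁻¹ - t⁻¹ ∈ B) : B = ⊤ := by
  by_contra hBtop
  have hindex := index_eq_two_of_forall_inv_add_sub_inv_sub_inv_mem (by omega) ht hB hBtop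
  have : CharP F 2 := ringChar.of_eq <| FiniteField.even_card_iff_char_two.mpr <| by
    have := B.index_mul_card
    rw [hindex, Nat.card_eq_fintype_card (α := F)] at this
    omega
  obtain ⟨χ, rfl⟩ := exists_zmod_two_hom_ker_eq hindex
  let ψ := χ.comp (AddMonoidHom.mulLeft t⁻¹)
  have hψ : ψ ≠ 0 := fun h0 => hBtop <| AddMonoidHom.ker_eq_top_iff.mpr <| AddMonoidHom.ext
    fun w => by simpa [ψ, ht] using DFunLike.congr_fun h0 (t * w)
  obtain ⟨_, ⟨u, rfl⟩, hu, hψu⟩ := exists_mem_range_artinSchreierHom_inv_ne hF hψ (ψ 1)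
  rw [artinSchreierHom_apply] at hu hψu
  have hmem := hB (t * u)
  rw [inv_mul_add_sub_inv_mul_sub_inv ht hu, AddMonoidHom.mem_ker] at hmem
  change ψ ((u ^ 2 + u)⁻¹ + 1) = 0 at hmem
  rw [map_add] at hmem
  exact hψu (CharTwo.add_eq_zero.mp hmem)

section Matrix

variable {F : Type*} {m n : ℕ}

theorem shiftRowsMap_add [Add F] (c : Fin m → Fin n) (a b : Matrix (Fin m) (Fin n) F) :
    shiftRowsMap c (a + b) = shiftRowsMap c a + shiftRowsMap c b := rfl

theorem shiftRowsMap_injective (c : Fin m → Fin n) :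
    Function.Injective (shiftRowsMap (F := F) c) := fun a b h => by
  ext i j
  have : NeZero n := NeZero.of_pos j.pos
  simpa [shiftRowsMap] using congr_fun₂ h i (j + c i)

variable [Field F]

/-- The map `α = ρ ∘ π`. -/
def mixShiftHom (C : Matrix (Fin m) (Fin m) F) (c : Fin m → Fin n) :
    Matrix (Fin m) (Fin n) F →+ Matrix (Fin m) (Fin n) F :=
  AddMonoidHom.mk' (fun a => C * shiftRowsMap c a) fun a b => by
    rw [shiftRowsMap_add, Matrix.mul_add]

theorem mixShiftHom_injective {C : Matrix (Fin m) (Fin m) F} (hC : IsUnit C)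
    (c : Fin m → Fin n) : Function.Injective (mixShiftHom C c) :=
  (Matrix.mul_right_injective_of_inv C⁻¹ C
    (Matrix.nonsing_inv_mul C ((Matrix.isUnit_iff_isUnit_det C).mp hC))).comp
      (shiftRowsMap_injective c)

@[simp]
theorem piecewiseInv_zero : piecewiseInv (0 : Matrix (Fin m) (Fin n) F) = 0 := by
  ext i j
  simp [piecewiseInv]

theorem piecewiseInv_single_add_sub (u : Matrix (Fin m) (Fin n) F) (i : Fin m) (j : Fin n)
    (x : F) :
    piecewiseInv (Matrix.single i j x + u) - piecewiseInv (Matrix.single i j x) -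
        piecewiseInv u = Matrix.single i j ((x + u i j)⁻¹ - x⁻¹ - (u i j)⁻¹) := by
  ext i' j'
  by_cases h : i = i' ∧ j = j'
  · obtain ⟨rfl, rfl⟩ := h
    simp [piecewiseInv]
  · simp [piecewiseInv, Matrix.single_apply_of_ne (h := h)]

theorem single_mem_of_apply_ne_zero [Fintype F] (hF : 8 < Fintype.card F)
    (α : Matrix (Fin m) (Fin n) F →+ Matrix (Fin m) (Fin n) F)
    {U : AddSubgroup (Matrix (Fin m) (Fin n) F)}
    (hdiff : ∀ u ∈ U, ∀ v, α (piecewiseInv (v + u)) - α (piecewiseInv v) ∈ U)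
    {u : Matrix (Fin m) (Fin n) F} (hu : u ∈ U) {i : Fin m} {j : Fin n} (hij : u i j ≠ 0)
    (y : F) : α (Matrix.single i j y) ∈ U := by
  let B := U.comap (α.comp (Matrix.singleAddMonoidHom i j))
  suffices B = ⊤ from (this ▸ AddSubgroup.mem_top y : y ∈ B)
  refine AddSubgroup.eq_top_of_forall_inv_add_sub_inv_sub_inv_mem hF hij fun x => ?_
  have hu0 := hdiff u hu 0
  rw [zero_add, piecewiseInv_zero, map_zero, sub_zero] at hu0
  simpa [B, ← piecewiseInv_single_add_sub] using sub_mem (hdiff u hu (Matrix.single i j x)) hu0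

theorem map_mem_of_forall_single_mem {M : Type*} [AddCommGroup M]
    (α : Matrix (Fin m) (Fin n) F →+ M) {U : AddSubgroup M} {S : Set (Fin m × Fin n)}
    (hS : ∀ q ∈ S, ∀ y, α (Matrix.single q.1 q.2 y) ∈ U) {a : Matrix (Fin m) (Fin n) F}
    (ha : ∀ q ∉ S, a q.1 q.2 = 0) : α a ∈ U := by
  rw [Matrix.matrix_eq_sum_single a, map_sum]
  refine U.sum_mem fun i _ => ?_
  rw [map_sum]
  refine U.sum_mem fun j _ => ?_
  by_cases hq : (i, j) ∈ S
  · exact hS _ hq _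
  · rw [ha _ hq, Matrix.single_zero, map_zero]
    exact U.zero_mem

end Matrix

theorem stmt_16_general (p r m n : ℕ) (hr : 4 < r)
    (F : Type*) [Field F] [Fintype F] (hF : Fintype.card F = p ^ r)
    [Algebra (ZMod p) F]
    (c : Fin m → Fin n) (C : Matrix (Fin m) (Fin m) F) (hC : IsUnit C)
    (U : Submodule (ZMod p) (Matrix (Fin m) (Fin n) F))
    (hdiff : ∀ u ∈ U, ∀ v : Matrix (Fin m) (Fin n) F,
      C * shiftRowsMap c (piecewiseInv (v + u)) - C * shiftRowsMap c (piecewiseInv v) ∈ U) :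
    (fun a : Matrix (Fin m) (Fin n) F => C * shiftRowsMap c a) '' (U : Set (Matrix (Fin m) (Fin n) F))
        = (U : Set (Matrix (Fin m) (Fin n) F)) ∧
      ∃ S : Set (Fin m × Fin n), (U : Set (Matrix (Fin m) (Fin n) F)) =
        {a : Matrix (Fin m) (Fin n) F | ∀ q : Fin m × Fin n, q ∉ S → a q.1 q.2 = 0} := by
  have hF8 : 8 < Fintype.card F := by
    have hp : 1 < p := (one_lt_pow_iff (by omega : r ≠ 0)).mp (hF ▸ Fintype.one_lt_card)
    calc 8 = 2 ^ 3 := rfl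
      _ < 2 ^ r := Nat.pow_lt_pow_right (by norm_num) (by omega)
      _ ≤ p ^ r := Nat.pow_le_pow_left hp r
      _ = Fintype.card F := hF.symm
  set S : Set (Fin m × Fin n) := {q | ∃ u ∈ U, u q.1 q.2 ≠ 0}
  set V : Set (Matrix (Fin m) (Fin n) F) := {a | ∀ q ∉ S, a q.1 q.2 = 0}
  have hUS : (U : Set _) ⊆ V := fun a ha q hq => by_contra fun h => hq ⟨a, ha, h⟩
  have hαS : mixShiftHom C c '' V ⊆ U := by
    rintro _ ⟨a, ha, rfl⟩
    refine map_mem_of_forall_single_mem (U := U.toAddSubgroup) _ (fun q hq y => ?_) ha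
    obtain ⟨u, hu, hq⟩ := hq
    exact single_mem_of_apply_ne_zero hF8 _ (U := U.toAddSubgroup) hdiff hu hq y
  obtain ⟨himage, hU⟩ := Set.image_eq_self_and_eq_of_image_subset (mixShiftHom_injective hC c)
    (Set.toFinite _) hUS hαS
  exact ⟨himage, S, hU⟩

/-- If `U ≠ {0}` is a `GF(p)`-subspace of `V = M_{m,n}(GF(p^r))` (`r > 4`) such that
`(α ∘ γ)(v + u) - (α ∘ γ)(v) ∈ U` for all `u ∈ U`, `v ∈ V`, where `α = ρ ∘ π`, then
`α(U) = U` and `U` is the sum of some of the entry subspaces, i.e. the set of matrices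
supported on some fixed set `S` of positions. -/
theorem stmt_16 (p r m n : ℕ) (hp : p.Prime) (hr : 4 < r) (hm : 1 ≤ m) (hn : 1 ≤ n)
    (F : Type*) [Field F] [Fintype F] [DecidableEq F] (hF : Fintype.card F = p ^ r)
    [Algebra (ZMod p) F]
    (c : Fin m → Fin n) (C : Matrix (Fin m) (Fin m) F) (hC : IsUnit C)
    (U : Submodule (ZMod p) (Matrix (Fin m) (Fin n) F)) (hU : U ≠ ⊥)
    (hdiff : ∀ u ∈ U, ∀ v : Matrix (Fin m) (Fin n) F,
      C * shiftRowsMap c (piecewiseInv (v + u)) - C * shiftRowsMap c (piecewiseInv v) ∈ U) :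
    (fun a : Matrix (Fin m) (Fin n) F => C * shiftRowsMap c a) '' (U : Set (Matrix (Fin m) (Fin n) F))
        = (U : Set (Matrix (Fin m) (Fin n) F)) ∧
      ∃ S : Set (Fin m × Fin n), (U : Set (Matrix (Fin m) (Fin n) F)) =
        {a : Matrix (Fin m) (Fin n) F | ∀ q : Fin m × Fin n, q ∉ S → a q.1 q.2 = 0} :=
  stmt_16_general p r m n hr F hF c C hC U hdiff
end
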